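/- arXiv:2404.19740 — 4 statements merged into one kernel-verified Lean document; each statement's English description precedes it below -/
import Mathlib

section
/- For a weakly lexicographic goods-only instance with n agents, the maximin share vector of an agent i equals (x_1,...,x_k), where x_l = ⌊s_i(l)/r_l⌋ with r_1 = n and r_{l+1} = r_l − (s_i(l) − r_l·x_l), where s_i(l) is the number of goods in i's l-th indifference class. -/
/-- Strict lexicographic dominance on score vectors: `LexLt f g` means `f <_lex g`. -/
def LexLt {k : ℕ} (f g : Fin k → ℕ) : Prop :=
  ∃ j : Fin k, f j < g j ∧ ∀ i : Fin k, i < j → f i = g i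

/-- Weak lexicographic dominance. -/
def LexLe {k : ℕ} (f g : Fin k → ℕ) : Prop := f = g ∨ LexLt f g

/-- Score vector of a bundle `X` of goods, given indifference classes `cls`
(class `0` is the most important). -/
def score {m k : ℕ} (cls : Fin m → Fin k) (X : Finset (Fin m)) : Fin k → ℕ :=
  fun l => (X.filter fun a => cls a = l).card

/-- An `n`-partition of the items `Fin m`: every item belongs to exactly one bundle. -/
def IsPartition {n m : ℕ} (A : Fin n → Finset (Fin m)) : Prop :=
  ∀ c : Fin m, ∃! i : Fin n, c ∈ A i

lemma lex_total {k : ℕ} (f g : Fin k → ℕ) : f = g ∨ LexLt f g ∨ LexLt g f := by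
  by_cases h : f = g
  · exact Or.inl h
  · right
    have hne : ∃ i, f i ≠ g i := by
      by_contra hc
      push_neg at hc
      exact h (funext hc)
    classical
    have hS : (Finset.univ.filter fun i => f i ≠ g i).Nonempty := by
      obtain ⟨i, hi⟩ := hne
      exact ⟨i, by simp [hi]⟩
    obtain ⟨j, hj, hjmin⟩ := Finset.exists_min_image _ id hS
    simp only [Finset.mem_filter, Finset.mem_univ, true_and] at hj hjmin
    have heq : ∀ i, i < j → f i = g i := by
      intro i hi
      by_contra hc
      exact absurd (hjmin i hc) (by simpa using hi.not_ge)
    rcases lt_or_gt_of_ne hj with h1 | h1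
    · exact Or.inl ⟨j, h1, heq⟩
    · exact Or.inr ⟨j, h1, fun i hi => (heq i hi).symm⟩


lemma count_mod (r : ℕ) (hr : 0 < r) (c : ℕ) (hcr : c < r) (s : ℕ) :
    ((Finset.range s).filter fun t => t % r = c).card
      = s / r + if c < s % r then 1 else 0 := by
  induction s with
  | zero => simp
  | succ s ih =>
    rw [Finset.range_add_one, Finset.filter_insert]
    have hmod : s % r < r := Nat.mod_lt _ hr
    have hdiv : s % r + r * (s / r) = s := Nat.mod_add_div s r
    rcases Nat.lt_or_ge (s % r + 1) r with h1 | h1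
    · have hu := (Nat.div_mod_unique hr (a := s+1) (d := s/r) (c := s%r+1)).2
        ⟨by omega, h1⟩
      rw [hu.1, hu.2]
      by_cases hc : s % r = c
      · rw [if_pos hc, Finset.card_insert_of_notMem (by simp), ih]
        split_ifs <;> omega
      · rw [if_neg hc, ih]
        split_ifs <;> omega
    · have hu := (Nat.div_mod_unique hr (a := s+1) (d := s/r + 1) (c := 0)).2
        ⟨by rw [Nat.mul_succ]; omega, hr⟩
      rw [hu.1, hu.2]
      by_cases hc : s % r = c
      · rw [if_pos hc, Finset.card_insert_of_notMem (by simp), ih]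
        split_ifs <;> omega
      · rw [if_neg hc, ih]
        split_ifs <;> omega

theorem part1 {n m k : ℕ} (hn : 0 < n) (cls : Fin m → Fin k)
    (s : ℕ → ℕ) (hs : ∀ l : Fin k, s l.val = (Finset.univ.filter fun a => cls a = l).card)
    (r : ℕ → ℕ) (hr0 : r 0 = n)
    (hrec : ∀ l : ℕ, r (l + 1) = r l - (s l - r l * (s l / r l)))
    (x : Fin k → ℕ) (hx : ∀ l : Fin k, x l = s l.val / r l.val) :
    (∃ A : Fin n → Finset (Fin m), IsPartition A ∧
      ∀ j : Fin n, LexLe x (score cls (A j))) := by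
  classical
  have hmod : ∀ l : ℕ, r (l + 1) = r l - s l % r l := by
    intro l
    have h := Nat.mod_add_div (s l) (r l)
    rw [hrec l]
    omega
  have rpos : ∀ l : ℕ, 0 < r l := by
    intro l
    induction l with
    | zero => omega
    | succ l ih =>
      have h1 : s l % r l < r l := Nat.mod_lt _ ih
      rw [hmod]; omega
  have rmono : ∀ l : ℕ, r (l + 1) ≤ r l := by
    intro l; rw [hmod]; exact Nat.sub_le _ _
  have rle : ∀ l : ℕ, r l ≤ n := by
    intro l
    induction l with
    | zero => omega
    | succ l ih => exact le_trans (rmono l) ih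
  -- classes
  set C : Fin k → Finset (Fin m) := fun l => Finset.univ.filter fun a => cls a = l with hC
  have hCs : ∀ l : Fin k, (C l).card = s l.val := fun l => (hs l).symm
  have hmemC : ∀ a : Fin m, a ∈ C (cls a) := fun a => by simp [hC]
  -- index of an item within its class
  set idx : Fin m → ℕ :=
    fun a => ((((C (cls a)).orderIsoOfFin rfl).symm ⟨a, hmemC a⟩ : Fin _) : ℕ) with hidx
  have idx_lt : ∀ a : Fin m, idx a < s (cls a).val := by
    intro a
    rw [← hCs (cls a)]
    exact (((C (cls a)).orderIsoOfFin rfl).symm ⟨a, hmemC a⟩).isLt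
  have key : ∀ (l : Fin k) (a : Fin m) (h : a ∈ C l),
      idx a = ((((C l).orderIsoOfFin rfl).symm ⟨a, h⟩ : Fin _) : ℕ) := by
    intro l a h
    have hcl : cls a = l := by simpa [hC] using h
    subst hcl
    rfl
  have idx_inj : ∀ a b : Fin m, cls a = cls b → idx a = idx b → a = b := by
    intro a b hcl hab
    have hb' : b ∈ C (cls a) := by rw [hcl]; exact hmemC b
    rw [key (cls a) a (hmemC a), key (cls a) b hb'] at hab
    have := (((C (cls a)).orderIsoOfFin rfl).symm.injective) (Fin.ext hab)
    exact Subtype.ext_iff.mp this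
  have idx_surj : ∀ (l : Fin k) (t : ℕ), t < s l.val →
      ∃ a : Fin m, cls a = l ∧ idx a = t := by
    intro l t ht
    have ht' : t < (C l).card := by rw [hCs]; exact ht
    set av := ((C l).orderIsoOfFin rfl ⟨t, ht'⟩ : {y // y ∈ C l}) with hav
    have hmem : (av : Fin m) ∈ C l := av.2
    have hcl : cls (av : Fin m) = l := by
      have := hmem
      simp only [hC, Finset.mem_filter] at this
      exact this.2
    refine ⟨av, hcl, ?_⟩
    rw [key l av hmem]
    have h2 : (⟨(av : Fin m), hmem⟩ : {y // y ∈ C l}) = av := rfl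
    rw [h2, hav]
    simp
  -- bundle assignment
  have hbnd : ∀ a : Fin m, r (cls a).val - 1 - idx a % r (cls a).val < n := by
    intro a
    have h1 := rpos (cls a).val
    have h2 := rle (cls a).val
    omega
  set bundle : Fin m → Fin n :=
    fun a => ⟨r (cls a).val - 1 - idx a % r (cls a).val, hbnd a⟩ with hbundle
  set A : Fin n → Finset (Fin m) := fun j => Finset.univ.filter fun a => bundle a = j with hAdef
  have hApart : IsPartition A := by
    intro c
    refine ⟨bundle c, by simp [hAdef], ?_⟩
    intro j hj
    simp only [hAdef, Finset.mem_filter, Finset.mem_univ, true_and] at hj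
    exact hj.symm
  -- score computation
  have scoreA : ∀ (j : Fin n) (l : Fin k),
      score cls (A j) l =
        if j.val < r l.val then
          s l.val / r l.val + (if r l.val - 1 - j.val < s l.val % r l.val then 1 else 0)
        else 0 := by
    intro j l
    have hcard : score cls (A j) l
        = ((Finset.range (s l.val)).filter fun t =>
            r l.val - 1 - t % r l.val = j.val).card := by
      apply Finset.card_bij (fun a _ => idx a)
      · intro a ha
        simp only [hAdef, score, Finset.mem_filter, Finset.mem_univ, true_and] at ha
        obtain ⟨hb, hcl⟩ := ha
        simp only [Finset.mem_filter, Finset.mem_range]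
        constructor
        · rw [← hcl]; exact idx_lt a
        · have : (bundle a : ℕ) = j.val := by rw [hb]
          simp only [hbundle] at this
          rw [← hcl]
          exact this
      · intro a ha b hb hab
        simp only [score, Finset.mem_filter] at ha hb
        exact idx_inj a b (ha.2.trans hb.2.symm) hab
      · intro t ht
        simp only [Finset.mem_filter, Finset.mem_range] at ht
        obtain ⟨a, hcl, hia⟩ := idx_surj l t ht.1
        refine ⟨a, ?_, hia⟩
        simp only [score, hAdef, Finset.mem_filter, Finset.mem_univ, true_and]
        refine ⟨?_, hcl⟩
        apply Fin.ext
        simp only [hbundle]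
        rw [hcl, hia]
        exact ht.2
    rw [hcard]
    by_cases hj : j.val < r l.val
    · rw [if_pos hj]
      have hrl := rpos l.val
      have hfe : ((Finset.range (s l.val)).filter fun t => r l.val - 1 - t % r l.val = j.val)
          = ((Finset.range (s l.val)).filter fun t => t % r l.val = r l.val - 1 - j.val) := by
        apply Finset.filter_congr
        intro t _
        have := Nat.mod_lt t hrl
        constructor <;> (intro h; omega)
      rw [hfe, count_mod _ hrl _ (by omega)]
    · rw [if_neg hj]
      rw [Finset.card_eq_zero, Finset.filter_eq_empty_iff]
      intro t _
      have hrl := rpos l.val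
      omega
  -- lexicographic conclusion
  refine ⟨A, hApart, ?_⟩
  intro j
  by_cases hall : ∀ l : Fin k, j.val < r (l.val + 1)
  · left
    apply funext
    intro l
    have h1 := hall l
    have h2 := hmod l.val
    have h3 := rpos l.val
    have h4 : s l.val % r l.val < r l.val := Nat.mod_lt _ h3
    rw [scoreA j l, if_pos (by omega), if_neg (by omega), hx l]
    omega
  · right
    push_neg at hall
    have hS : (Finset.univ.filter fun l : Fin k => r (l.val + 1) ≤ j.val).Nonempty := by
      obtain ⟨l, hl⟩ := hall
      exact ⟨l, by simp [hl]⟩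
    obtain ⟨l0, hl0, hl0min⟩ := Finset.exists_min_image _ id hS
    simp only [Finset.mem_filter, Finset.mem_univ, true_and, id] at hl0 hl0min
    have hjlt : ∀ i : Fin k, i < l0 → j.val < r (i.val + 1) := by
      intro i hi
      by_contra hc
      push_neg at hc
      exact absurd (hl0min i hc) (by simpa using hi.not_ge)
    have hjr0 : j.val < r l0.val := by
      rcases Nat.eq_zero_or_pos l0.val with h0 | h0
      · rw [h0, hr0]; exact j.isLt
      · obtain ⟨i, hi⟩ := Nat.exists_eq_add_of_lt h0
        have hik : i < k := by omega
        have := hjlt ⟨i, hik⟩ (by rw [Fin.lt_def]; simp; omega)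
        simp only at this
        have : j.val < r (i + 1) := this
        rw [show l0.val = i + 1 by omega]
        exact this
    refine ⟨l0, ?_, ?_⟩
    · have h2 := hmod l0.val
      have h4 : s l0.val % r l0.val < r l0.val := Nat.mod_lt _ (rpos l0.val)
      rw [scoreA j l0, if_pos hjr0, if_pos (by omega), hx l0]
      omega
    · intro i hi
      have h1 := hjlt i hi
      have h2 := hmod i.val
      have h3 := rpos i.val
      have h4 : s i.val % r i.val < r i.val := Nat.mod_lt _ h3
      rw [scoreA j i, if_pos (by omega), if_neg (by omega), hx i]
      omega

theorem part2 {n m k : ℕ} (hn : 0 < n) (cls : Fin m → Fin k)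
    (s : ℕ → ℕ) (hs : ∀ l : Fin k, s l.val = (Finset.univ.filter fun a => cls a = l).card)
    (r : ℕ → ℕ) (hr0 : r 0 = n)
    (hrec : ∀ l : ℕ, r (l + 1) = r l - (s l - r l * (s l / r l)))
    (x : Fin k → ℕ) (hx : ∀ l : Fin k, x l = s l.val / r l.val) :
    (∀ A : Fin n → Finset (Fin m), IsPartition A →
      ∃ j : Fin n, LexLe (score cls (A j)) x) := by
  classical
  have hmod : ∀ l : ℕ, r (l + 1) = r l - s l % r l := by
    intro l
    have h := Nat.mod_add_div (s l) (r l)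
    rw [hrec l]
    omega
  have rpos : ∀ l : ℕ, 0 < r l := by
    intro l
    induction l with
    | zero => omega
    | succ l ih =>
      have h1 : s l % r l < r l := Nat.mod_lt _ ih
      rw [hmod]; omega
  intro A hA
  by_contra hcon
  push_neg at hcon
  have hlt : ∀ j : Fin n, LexLt x (score cls (A j)) := by
    intro j
    rcases lex_total (score cls (A j)) x with h | h | h
    · exact absurd (Or.inl h) (hcon j)
    · exact absurd (Or.inr h) (hcon j)
    · exact h
  -- total score sums
  have hsum : ∀ l : Fin k, ∑ j : Fin n, score cls (A j) l = s l.val := by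
    intro l
    have hcover : (Finset.univ.filter fun a => cls a = l)
        = Finset.univ.biUnion (fun j : Fin n => (A j).filter fun a => cls a = l) := by
      ext a
      simp only [Finset.mem_filter, Finset.mem_univ, true_and, Finset.mem_biUnion]
      constructor
      · intro h
        obtain ⟨j, hj, _⟩ := hA a
        exact ⟨j, hj, h⟩
      · rintro ⟨j, _, h⟩
        exact h
    have hdisj : ∀ j1 ∈ (Finset.univ : Finset (Fin n)), ∀ j2 ∈ Finset.univ, j1 ≠ j2 →
        Disjoint ((A j1).filter fun a => cls a = l) ((A j2).filter fun a => cls a = l) := by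
      intro j1 _ j2 _ hne
      rw [Finset.disjoint_left]
      intro a ha1 ha2
      simp only [Finset.mem_filter] at ha1 ha2
      obtain ⟨j, _, huniq⟩ := hA a
      exact hne ((huniq j1 ha1.1).trans (huniq j2 ha2.1).symm)
    rw [hs l, hcover, Finset.card_biUnion hdisj]
    rfl
  -- the sets of bundles agreeing with x on an initial segment
  set B : ℕ → Finset (Fin n) :=
    fun l => Finset.univ.filter fun j => ∀ i : Fin k, i.val < l → score cls (A j) i = x i
    with hB
  have hBsub : ∀ l : ℕ, B (l + 1) ⊆ B l := by
    intro l j hj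
    simp only [hB, Finset.mem_filter, Finset.mem_univ, true_and] at hj ⊢
    intro i hi
    exact hj i (by omega)
  have main : ∀ l : ℕ, l ≤ k → r l ≤ (B l).card := by
    intro l
    induction l with
    | zero =>
      intro _
      have : B 0 = Finset.univ := by
        ext j; simp [hB]
      rw [this, hr0]
      simp
    | succ l ih =>
      intro hl
      have hlk : l < k := by omega
      set lf : Fin k := ⟨l, hlk⟩ with hlf
      have hb := ih (by omega)
      -- every bundle in B l has score at lf at least x lf; in B l \ B (l+1), at least x lf + 1
      have hscore_eq : ∀ j ∈ B (l + 1), score cls (A j) lf = x lf := by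
        intro j hj
        simp only [hB, Finset.mem_filter, Finset.mem_univ, true_and] at hj
        exact hj lf (by simp [hlf])
      have hscore_gt : ∀ j ∈ B l \ B (l + 1), x lf + 1 ≤ score cls (A j) lf := by
        intro j hj
        rw [Finset.mem_sdiff] at hj
        obtain ⟨hj1, hj2⟩ := hj
        simp only [hB, Finset.mem_filter, Finset.mem_univ, true_and] at hj1 hj2
        push_neg at hj2
        obtain ⟨i, hik, hine⟩ := hj2
        have hil : i = lf := by
          apply Fin.ext
          simp only [hlf]
          by_contra hilne
          exact hine (hj1 i (by omega))
        rw [hil] at hine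
        obtain ⟨i0, hi0lt, hi0eq⟩ := hlt j
        rcases lt_trichotomy i0 lf with h1 | h1 | h1
        · exact absurd (hj1 i0 (by exact_mod_cast h1)) (Nat.ne_of_gt hi0lt)
        · rw [h1] at hi0lt; omega
        · exact absurd (hi0eq lf h1).symm hine
      have e2 : (B l \ B (l + 1)).card * (x lf + 1) ≤ ∑ j ∈ B l \ B (l + 1), score cls (A j) lf := by
        calc (B l \ B (l + 1)).card * (x lf + 1)
            = ∑ _j ∈ B l \ B (l + 1), (x lf + 1) := by rw [Finset.sum_const, smul_eq_mul, mul_comm]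
          _ ≤ _ := Finset.sum_le_sum hscore_gt
      have e1 : ∑ j ∈ B (l + 1), score cls (A j) lf = (B (l + 1)).card * x lf := by
        rw [Finset.sum_congr rfl hscore_eq, Finset.sum_const, smul_eq_mul]
      have e3 : ∑ j ∈ B l \ B (l + 1), score cls (A j) lf + ∑ j ∈ B (l + 1), score cls (A j) lf
          = ∑ j ∈ B l, score cls (A j) lf := Finset.sum_sdiff (hBsub l)
      have e4 : ∑ j ∈ B l, score cls (A j) lf ≤ s l := by
        rw [show s l = s lf.val by rw [hlf], ← hsum lf]
        exact Finset.sum_le_sum_of_subset (Finset.subset_univ _)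
      -- combine
      obtain ⟨d, hd⟩ := Nat.le.dest (Finset.card_le_card (hBsub l))
      have hcs : (B l \ B (l + 1)).card = d := by
        rw [Finset.card_sdiff_of_subset (hBsub l)]; omega
      have hbig : (B (l+1)).card * x lf + d * (x lf + 1) ≤ s l := by
        rw [← hcs] at *
        omega
      -- now use r l ≤ card (B l) = card B(l+1) + d
      have hxl : x lf = s l / r l := by rw [hx lf, hlf]
      have hrl1 : r (l + 1) = r l - s l % r l := hmod l
      have hda : s l % r l + r l * (s l / r l) = s l := Nat.mod_add_div _ _
      have hmul : r l * (x lf + 1) ≤ ((B (l+1)).card + d) * (x lf + 1) :=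
        Nat.mul_le_mul_right _ (by omega)
      have hmul2 : ((B (l+1)).card + d) * (x lf + 1)
          = (B (l+1)).card * x lf + d * (x lf + 1) + (B (l+1)).card := by ring
      have hmul3 : r l * (x lf + 1) = r l * (s l / r l) + r l := by rw [hxl]; ring
      have hmodlt : s l % r l < r l := Nat.mod_lt _ (rpos l)
      omega
  have hk := main k le_rfl
  have hrk : 0 < r k := rpos k
  have : (B k).Nonempty := Finset.card_pos.mp (by omega)
  obtain ⟨j, hj⟩ := this
  simp only [hB, Finset.mem_filter, Finset.mem_univ, true_and] at hj
  have : score cls (A j) = x := funext fun i => hj i i.isLt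
  exact hcon j (Or.inl this)

/-- closed form for the maximin share of an agent in a weakly lexicographic
goods-only instance with `n` agents: `MMS = (x_1,…,x_k)` with `x_l = ⌊s(l)/r_l⌋`,
`r_1 = n` and `r_{l+1} = r_l − (s(l) − r_l·x_l)`.  Being the MMS vector is expressed by:
some partition has every bundle weakly above `x`, and every partition has a bundle
weakly below `x` (both in the lexicographic order). -/
theorem stmt3 {n m k : ℕ} (hn : 0 < n) (cls : Fin m → Fin k)
    (s : ℕ → ℕ) (hs : ∀ l : Fin k, s l.val = (Finset.univ.filter fun a => cls a = l).card)
    (r : ℕ → ℕ) (hr0 : r 0 = n)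
    (hrec : ∀ l : ℕ, r (l + 1) = r l - (s l - r l * (s l / r l)))
    (x : Fin k → ℕ) (hx : ∀ l : Fin k, x l = s l.val / r l.val) :
    (∃ A : Fin n → Finset (Fin m), IsPartition A ∧
      ∀ j : Fin n, LexLe x (score cls (A j))) ∧
    (∀ A : Fin n → Finset (Fin m), IsPartition A →
      ∃ j : Fin n, LexLe (score cls (A j)) x) := by
  exact ⟨part1 hn cls s hs r hr0 hrec x hx, part2 hn cls s hs r hr0 hrec x hx⟩
end

section
/- In any weakly lexicographic chores-only instance, every EFX allocation satisfies MMS: if for every pair of agents i, j and every chore c in A_i, agent i weakly prefers A_i \ {c} to A_j, then every agent i has s_i(A_i) ≥_lex MMS_i. -/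
/-- Strict lexicographic dominance on integer score vectors: `LexLtZ f g` means `f <_lex g`. -/
def LexLtZ {k : ℕ} (f g : Fin k → ℤ) : Prop :=
  ∃ j : Fin k, f j < g j ∧ ∀ i : Fin k, i < j → f i = g i

/-- Weak lexicographic dominance on integer score vectors. -/
def LexLeZ {k : ℕ} (f g : Fin k → ℤ) : Prop := f = g ∨ LexLtZ f g

/-- Score vector of a bundle `X` of chores, given indifference classes `cls`
(class `0` is the most important, i.e. worst, chores); coordinates are negated counts. -/
def cscore {m k : ℕ} (cls : Fin m → Fin k) (X : Finset (Fin m)) : Fin k → ℤ :=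
  fun l => -(((X.filter fun a => cls a = l).card : ℤ))

/-!
Fix agent `i` and suppose some `n`-partition `P` has every bundle strictly better than `A i`
for `i`. Let `ℓ` be the worst class occurring in `A i`. Reading the counts of the classes
`0, …, ℓ` as the digits of an integer in base `m + 1` turns `i`'s lexicographic preferences,
truncated at `ℓ`, into an additive integer measure `Φ`. Since every bundle of `P` is strictly
better than `A i` at some class `≤ ℓ`, each has `Φ(P j) ≤ Φ(A i) - 1`; by EFX, removing a chore of
class `ℓ` from `A i` — which lowers `Φ` by exactly `1` — leaves it no better than any `A j`, so
`Φ(A j) ≥ Φ(A i) - 1`. Summing, `∑ Φ(P j) < ∑ Φ(A j)`, whereas both sums equal `Φ` of all chores.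
-/

open Finset

lemma lexLtZ_iff_toLex_lt {k : ℕ} {f g : Fin k → ℤ} : LexLtZ f g ↔ toLex f < toLex g :=
  ⟨fun ⟨j, hlt, heq⟩ => ⟨j, heq, hlt⟩, fun ⟨j, heq, hlt⟩ => ⟨j, hlt, heq⟩⟩

lemma lexLeZ_iff_toLex_le {k : ℕ} {f g : Fin k → ℤ} : LexLeZ f g ↔ toLex f ≤ toLex g := by
  rw [LexLeZ, lexLtZ_iff_toLex_lt, le_iff_eq_or_lt, toLex_inj]
  rfl

lemma lexLtZ_of_not_lexLeZ {k : ℕ} {f g : Fin k → ℤ} (h : ¬LexLeZ f g) : LexLtZ g f := by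
  rw [lexLeZ_iff_toLex_le, not_le] at h
  exact lexLtZ_iff_toLex_lt.2 h

lemma IsPartition.sum_sum_eq {n m : ℕ} {M : Type*} [AddCommMonoid M]
    {P : Fin n → Finset (Fin m)} (hP : IsPartition P) (w : Fin m → M) :
    ∑ j, ∑ c ∈ P j, w c = ∑ c, w c := by
  choose f hf using hP
  have hPf : ∀ j, P j = ({c | f c = j} : Finset (Fin m)) := fun j => by
    ext c
    simp only [mem_filter_univ]
    exact ⟨fun hc => ((hf c).2 j hc).symm, fun h => h ▸ (hf c).1⟩
  simp_rw [hPf]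
  exact sum_fiberwise univ f w

section LexEncoding

variable {m k : ℕ} (cls : Fin m → Fin k)

def classCount (t : ℕ) (X : Finset (Fin m)) : ℕ := #{c ∈ X | (cls c : ℕ) = t}

lemma classCount_le (t : ℕ) (X : Finset (Fin m)) : classCount cls t X ≤ m :=
  (card_filter_le _ _).trans ((card_le_univ X).trans_eq (Fintype.card_fin m))

lemma cscore_eq_neg_classCount (X : Finset (Fin m)) (l : Fin k) :
    cscore cls X l = -(classCount cls l X : ℤ) := by
  simp only [cscore, classCount, Fin.val_inj]

lemma classCount_lt_of_cscore_lt {X Y : Finset (Fin m)} {l : Fin k}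
    (h : cscore cls Y l < cscore cls X l) : classCount cls l X < classCount cls l Y := by
  rwa [cscore_eq_neg_classCount, cscore_eq_neg_classCount, neg_lt_neg_iff, Nat.cast_lt] at h

lemma exists_mem_of_cscore_lt {X Y : Finset (Fin m)} {l : Fin k}
    (h : cscore cls Y l < cscore cls X l) : ∃ c ∈ Y, cls c = l := by
  obtain ⟨c, hc⟩ := card_pos.1 ((classCount_lt_of_cscore_lt cls h).trans_le' (Nat.zero_le _))
  exact ⟨c, (mem_filter.1 hc).1, Fin.ext (mem_filter.1 hc).2⟩

lemma classCount_eq_of_cscore_eq {X Y : Finset (Fin m)} {ι : ℕ} (hι : ι ≤ k)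
    (h : ∀ l : Fin k, (l : ℕ) < ι → cscore cls Y l = cscore cls X l) {t : ℕ} (ht : t < ι) :
    classCount cls t X = classCount cls t Y := by
  have := h ⟨t, by omega⟩ ht
  rw [cscore_eq_neg_classCount, cscore_eq_neg_classCount, neg_inj, Nat.cast_inj] at this
  exact this.symm

/-- Class counts never exceed `m`, so these weights are the place values of the base-`(m + 1)`
digits `classCount 0, …, classCount (L - 1)`, and `lexEncoding L` orders bundles lexicographically
by their counts of the classes below `L`. -/
def lexWeight (L : ℕ) (c : Fin m) : ℤ :=
  if (cls c : ℕ) < L then ((m : ℤ) + 1) ^ (L - 1 - cls c) else 0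

def lexEncoding (L : ℕ) (X : Finset (Fin m)) : ℤ := ∑ c ∈ X, lexWeight cls L c

lemma lexWeight_succ (L : ℕ) (c : Fin m) :
    lexWeight cls (L + 1) c = (m + 1) * lexWeight cls L c + if (cls c : ℕ) = L then 1 else 0 := by
  unfold lexWeight
  rcases lt_trichotomy (cls c : ℕ) L with h | h | h
  · rw [if_pos (by omega), if_pos h, if_neg h.ne, add_zero, ← pow_succ']
    congr 1
    omega
  · simp [h]
  · rw [if_neg (by omega), if_neg (by omega), if_neg h.ne']
    ring

lemma lexEncoding_zero (X : Finset (Fin m)) : lexEncoding cls 0 X = 0 := by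
  simp [lexEncoding, lexWeight]

lemma lexEncoding_succ (L : ℕ) (X : Finset (Fin m)) :
    lexEncoding cls (L + 1) X = (m + 1) * lexEncoding cls L X + classCount cls L X := by
  simp only [lexEncoding, lexWeight_succ, sum_add_distrib, mul_sum, classCount, card_filter]
  push_cast
  rfl

lemma lexEncoding_erase {X : Finset (Fin m)} {c : Fin m} (hc : c ∈ X) :
    lexEncoding cls (cls c + 1) (X.erase c) = lexEncoding cls (cls c + 1) X - 1 := by
  rw [lexEncoding, lexEncoding, sum_erase_eq_sub hc]
  simp [lexWeight]

lemma lexEncoding_eq_of_classCount_eq {X Y : Finset (Fin m)} {L : ℕ}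
    (h : ∀ t < L, classCount cls t X = classCount cls t Y) :
    lexEncoding cls L X = lexEncoding cls L Y := by
  induction L with
  | zero => simp only [lexEncoding_zero]
  | succ L ih =>
    rw [lexEncoding_succ, lexEncoding_succ, ih fun t ht => h t (by omega), h L (by omega)]

lemma lexEncoding_lt_of_classCount_lt {X Y : Finset (Fin m)} {ι L : ℕ}
    (heq : ∀ t < ι, classCount cls t X = classCount cls t Y)
    (hlt : classCount cls ι X < classCount cls ι Y) (hL : ι < L) :
    lexEncoding cls L X < lexEncoding cls L Y := by
  induction L, hL using Nat.le_induction with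
  | base =>
    rw [lexEncoding_succ, lexEncoding_succ, lexEncoding_eq_of_classCount_eq cls heq]
    exact_mod_cast Int.add_lt_add_left (by exact_mod_cast hlt) _
  | succ L _ ih =>
    rw [lexEncoding_succ, lexEncoding_succ]
    -- a lead of one at the higher places outweighs any digit `≤ m` at place `L`
    have hdigit : (classCount cls L X : ℤ) ≤ m := by exact_mod_cast classCount_le cls L X
    nlinarith

lemma lexEncoding_lt_of_lexLtZ {X Y : Finset (Fin m)} {L : ℕ}
    (h : LexLtZ (cscore cls Y) (cscore cls X)) (hY : ∀ c ∈ Y, (cls c : ℕ) < L) :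
    lexEncoding cls L X < lexEncoding cls L Y := by
  obtain ⟨ι, hlt, heq⟩ := h
  obtain ⟨c, hc, rfl⟩ := exists_mem_of_cscore_lt cls hlt
  exact lexEncoding_lt_of_classCount_lt cls
    (fun t ht => classCount_eq_of_cscore_eq cls (cls c).isLt.le heq ht)
    (classCount_lt_of_cscore_lt cls hlt) (hY c hc)

lemma lexEncoding_le_of_lexLeZ {X Y : Finset (Fin m)} {L : ℕ} (hL : L ≤ k)
    (h : LexLeZ (cscore cls Y) (cscore cls X)) :
    lexEncoding cls L X ≤ lexEncoding cls L Y := by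
  rcases h with h | ⟨ι, hlt, heq⟩
  · exact (lexEncoding_eq_of_classCount_eq cls fun t ht =>
      classCount_eq_of_cscore_eq cls hL (fun l _ => congrFun h l) ht).le
  by_cases hιL : (ι : ℕ) < L
  · exact (lexEncoding_lt_of_classCount_lt cls
      (fun t ht => classCount_eq_of_cscore_eq cls ι.isLt.le heq ht)
      (classCount_lt_of_cscore_lt cls hlt) hιL).le
  · exact (lexEncoding_eq_of_classCount_eq cls fun t ht =>
      classCount_eq_of_cscore_eq cls hL (fun l hl => heq l (by omega)) ht).le

end LexEncoding

/-- in a weakly lexicographic chores-only instance, every EFX allocation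
satisfies MMS: if for every pair `i, j` and every chore `c ∈ A_i` we have
`s_i(A_i \ {c}) ≥_lex s_i(A_j)`, then for every agent `i`, `s_i(A_i) ≥_lex MMS_i`,
i.e. every `n`-partition has a bundle weakly below `A_i` for agent `i`. -/
theorem stmt5 {n m : ℕ} (K : Fin n → ℕ) (cls : ∀ i : Fin n, Fin m → Fin (K i))
    (A : Fin n → Finset (Fin m)) (hA : IsPartition A)
    (hEFX : ∀ i j : Fin n, ∀ c ∈ A i,
      LexLeZ (cscore (cls i) (A j)) (cscore (cls i) ((A i).erase c))) :
    ∀ i : Fin n, ∀ P : Fin n → Finset (Fin m), IsPartition P →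
      ∃ j : Fin n, LexLeZ (cscore (cls i) (P j)) (cscore (cls i) (A i)) := by
  intro i P hP
  by_contra! hworse
  have hbetter : ∀ j, LexLtZ (cscore (cls i) (A i)) (cscore (cls i) (P j)) := fun j =>
    lexLtZ_of_not_lexLeZ (hworse j)
  have hne : (A i).Nonempty := by
    obtain ⟨ι, hlt, -⟩ := hbetter i
    obtain ⟨c, hc, -⟩ := exists_mem_of_cscore_lt (cls i) hlt
    exact ⟨c, hc⟩
  obtain ⟨cmax, hcmax, hmax⟩ := (A i).exists_max_image (cls i) hne
  set Φ := lexEncoding (cls i) ((cls i cmax : ℕ) + 1)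
  have hP_lt : ∀ j, Φ (P j) < Φ (A i) := fun j =>
    lexEncoding_lt_of_lexLtZ _ (hbetter j) fun c hc => Nat.lt_succ_of_le (hmax c hc)
  have hA_ge : ∀ j, Φ (A i) - 1 ≤ Φ (A j) := fun j => by
    rw [← lexEncoding_erase _ hcmax]
    exact lexEncoding_le_of_lexLeZ _ (cls i cmax).isLt (hEFX i j cmax hcmax)
  have hsum : ∑ j, Φ (P j) < ∑ j, Φ (A j) :=
    sum_lt_sum (fun j _ => by linarith [hP_lt j, hA_ge j]) ⟨i, mem_univ i, hP_lt i⟩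
  simp only [Φ, lexEncoding, hP.sum_sum_eq, hA.sum_sum_eq] at hsum
  exact hsum.false
end

section
/- There exists a weakly lexicographic chores-only instance with two agents and three chores in which a partial allocation of two chores is envy-free, but no extension of it to a complete allocation is EFX. -/
instance {k : ℕ} (f g : Fin k → ℤ) : Decidable (LexLtZ f g) := by
  unfold LexLtZ; infer_instance

instance {k : ℕ} (f g : Fin k → ℤ) : Decidable (LexLeZ f g) := by
  unfold LexLeZ
  exact instDecidableOr (dp := decEq _ _)

/-- there is a weakly lexicographic chores-only instance with two agents
and three chores in which some partial allocation of two chores is envy-free, but no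
complete allocation extending it is EFX. -/
theorem stmt7 :
    ∃ (cls : Fin 2 → Fin 3 → Fin 2) (P : Fin 2 → Finset (Fin 3)),
      (∀ i j : Fin 2, i ≠ j → Disjoint (P i) (P j)) ∧
      (P 0 ∪ P 1).card = 2 ∧
      -- the partial allocation is envy-free
      (∀ i j : Fin 2, LexLeZ (cscore (cls i) (P j)) (cscore (cls i) (P i))) ∧
      -- no complete extension is EFX
      (∀ A : Fin 2 → Finset (Fin 3), IsPartition A → (∀ i, P i ⊆ A i) →
        ¬ (∀ i j : Fin 2, ∀ c ∈ A i,
            LexLeZ (cscore (cls i) (A j)) (cscore (cls i) ((A i).erase c)))) := by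
  refine ⟨fun _ c => if c = 0 then 0 else 1, ![{2}, {1}], ?_, ?_, ?_, ?_⟩
  · decide
  · decide
  · decide
  · intro A hpart hext h
    have h2 : (2 : Fin 3) ∈ A 0 := hext 0 (by decide)
    have h1 : (1 : Fin 3) ∈ A 1 := hext 1 (by decide)
    obtain ⟨i0, hi0, hu0⟩ := hpart 0
    have uniq : ∀ c : Fin 3, ∀ i j : Fin 2, c ∈ A i → c ∈ A j → i = j := by
      intro c i j hi hj
      obtain ⟨k, _, hk⟩ := hpart c
      rw [hk i hi, hk j hj]
    fin_cases i0
    · -- chore 0 with agent 0 : A 0 = {0,2}, A 1 = {1}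
      have hA0 : A 0 = {0, 2} := by
        ext c
        simp only [Finset.mem_insert, Finset.mem_singleton]
        constructor
        · intro hc
          fin_cases c
          · left; rfl
          · exact absurd (uniq 1 0 1 hc h1) (by decide)
          · right; rfl
        · rintro (rfl | rfl) <;> assumption
      have hA1 : A 1 = {1} := by
        ext c
        simp only [Finset.mem_singleton]
        constructor
        · intro hc
          fin_cases c
          · exact absurd (uniq 0 1 0 hc hi0) (by decide)
          · rfl
          · exact absurd (uniq 2 1 0 hc h2) (by decide)
        · rintro rfl; assumption
      have := h 0 1 2 (by rw [hA0]; decide)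
      rw [hA0, hA1] at this
      revert this; decide
    · -- chore 0 with agent 1 : A 1 = {0,1}, A 0 = {2}
      have hA1 : A 1 = {0, 1} := by
        ext c
        simp only [Finset.mem_insert, Finset.mem_singleton]
        constructor
        · intro hc
          fin_cases c
          · left; rfl
          · right; rfl
          · exact absurd (uniq 2 1 0 hc h2) (by decide)
        · rintro (rfl | rfl) <;> assumption
      have hA0 : A 0 = {2} := by
        ext c
        simp only [Finset.mem_singleton]
        constructor
        · intro hc
          fin_cases c
          · exact absurd (uniq 0 0 1 hc hi0) (by decide)
          · exact absurd (uniq 1 0 1 hc h1) (by decide)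
          · rfl
        · rintro rfl; assumption
      have := h 1 0 1 (by rw [hA1]; decide)
      rw [hA1, hA0] at this
      revert this; decide
end

section
/- In a chores-only instance where every chore can only be reassigned (not duplicated), for n = 2 agents, every EFX and PO allocation of the corresponding goods-only instance (with one 'not doing chore c' good per chore per non-assigned agent, i.e., n−1 = 1 good per chore) corresponds to an EFX and PO allocation of the chores instance, and vice versa. -/
/-- Score vector of a bundle of goods (positive counts), as integers. -/
def gscore {m k : ℕ} (cls : Fin m → Fin k) (X : Finset (Fin m)) : Fin k → ℤ :=
  fun l => ((X.filter fun a => cls a = l).card : ℤ)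

open Finset

lemma lexlt_neg {k : ℕ} (f g : Fin k → ℤ) : LexLtZ (-f) (-g) ↔ LexLtZ g f := by
  constructor
  · rintro ⟨j, h1, h2⟩
    refine ⟨j, by simpa using h1, fun i hi => ?_⟩
    have := h2 i hi
    simp only [Pi.neg_apply, neg_inj] at this
    exact this.symm
  · rintro ⟨j, h1, h2⟩
    refine ⟨j, by simpa using h1, fun i hi => ?_⟩
    have := h2 i hi
    simp [this]

lemma lexle_neg {k : ℕ} (f g : Fin k → ℤ) : LexLeZ (-f) (-g) ↔ LexLeZ g f := by
  unfold LexLeZ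
  rw [lexlt_neg]
  constructor
  · rintro (h | h)
    · left; exact (neg_injective h).symm
    · right; exact h
  · rintro (h | h)
    · left; rw [h]
    · right; exact h

lemma lexlt_sub {k : ℕ} (t f g : Fin k → ℤ) : LexLtZ (f - t) (g - t) ↔ LexLtZ f g := by
  constructor
  · rintro ⟨j, h1, h2⟩
    refine ⟨j, ?_, fun i hi => ?_⟩
    · simp only [Pi.sub_apply] at h1; omega
    · have := h2 i hi; simp only [Pi.sub_apply] at this; omega
  · rintro ⟨j, h1, h2⟩
    refine ⟨j, ?_, fun i hi => ?_⟩
    · simp only [Pi.sub_apply]; omega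
    · have := h2 i hi; simp only [Pi.sub_apply]; omega

lemma lexle_sub {k : ℕ} (t f g : Fin k → ℤ) : LexLeZ (f - t) (g - t) ↔ LexLeZ f g := by
  unfold LexLeZ
  rw [lexlt_sub]
  constructor
  · rintro (h | h)
    · left; funext i; have := congrFun h i; simp only [Pi.sub_apply] at this; omega
    · right; exact h
  · rintro (h | h)
    · left; rw [h]
    · right; exact h

lemma cscore_eq_neg {m k : ℕ} (cls : Fin m → Fin k) (X : Finset (Fin m)) :
    cscore cls X = -(gscore cls X) := rfl

lemma gscore_erase_le {m k : ℕ} (cls : Fin m → Fin k) (X : Finset (Fin m)) (g : Fin m)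
    (hg : g ∈ X) : LexLeZ (gscore cls (X.erase g)) (gscore cls X) := by
  right
  have hmem : g ∈ X.filter (fun a => cls a = cls g) := mem_filter.2 ⟨hg, rfl⟩
  refine ⟨cls g, ?_, fun l hl => ?_⟩
  · have h1 : (X.erase g).filter (fun a => cls a = cls g)
        = (X.filter (fun a => cls a = cls g)).erase g := by
      rw [Finset.filter_erase]
    have hpos : 0 < (X.filter (fun a => cls a = cls g)).card := card_pos.2 ⟨g, hmem⟩
    simp only [gscore, h1, Finset.card_erase_of_mem hmem]
    have : ((X.filter (fun a => cls a = cls g)).card : ℤ) ≥ 1 := by exact_mod_cast hpos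
    push_cast [Nat.cast_sub (by omega : 1 ≤ (X.filter (fun a => cls a = cls g)).card)]
    omega
  · have hne : g ∉ X.filter (fun a => cls a = l) := by
      simp only [mem_filter, not_and]
      intro _ h
      exact absurd hl (by rw [← h]; exact lt_irrefl _)
    have h1 : (X.erase g).filter (fun a => cls a = l)
        = (X.filter (fun a => cls a = l)).erase g := by rw [Finset.filter_erase]
    simp [gscore, h1, Finset.erase_eq_of_notMem hne]

lemma part_shift {m : ℕ} (P : Fin 2 → Finset (Fin m)) (hP : IsPartition P) :
    IsPartition (fun i => P (i + 1)) := by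
  have h2 : ∀ j : Fin 2, j + 1 + 1 = j := by decide
  intro c
  obtain ⟨j, hj, hu⟩ := hP c
  refine ⟨j + 1, by simpa [h2 j] using hj, fun y hy => ?_⟩
  have := hu (y + 1) hy
  calc y = y + 1 + 1 := (h2 y).symm
    _ = j + 1 := by rw [this]

lemma gscore_compl {m k : ℕ} (cls : Fin m → Fin k) (P : Fin 2 → Finset (Fin m))
    (hP : IsPartition P) (i : Fin 2) :
    cscore cls (P i) = gscore cls (P (i + 1)) - gscore cls (univ : Finset (Fin m)) := by
  have hcases : ∀ i j : Fin 2, j = i ∨ j = i + 1 := by decide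
  have hne : ∀ i : Fin 2, i ≠ i + 1 := by decide
  have hu : P i ∪ P (i + 1) = univ := by
    ext c
    simp only [mem_union, mem_univ, iff_true]
    obtain ⟨j, hj, _⟩ := hP c
    rcases hcases i j with h | h
    · left; rwa [← h]
    · right; rwa [← h]
  have hd : Disjoint (P i) (P (i + 1)) := by
    rw [Finset.disjoint_left]
    intro c h1 h2
    obtain ⟨j, _, huniq⟩ := hP c
    exact hne i ((huniq i h1).trans (huniq (i + 1) h2).symm)
  funext l
  have hcard : ((P i).filter (fun a => cls a = l)).card
      + ((P (i + 1)).filter (fun a => cls a = l)).card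
      = ((univ : Finset (Fin m)).filter (fun a => cls a = l)).card := by
    rw [← hu, filter_union,
      card_union_of_disjoint (Finset.disjoint_filter_filter hd)]
  simp only [cscore, gscore, Pi.sub_apply]
  omega

/-- for `n = 2` agents, the chores instance and the corresponding
goods-only instance (one good "not doing chore c" per chore, owned by the agent not
assigned `c`, with classes induced by reversing the chore preference, which here keeps
the same class indices) have corresponding allocations `B i = A (i+1)`, and the goods
allocation is EFX and PO iff the chores allocation is EFX and PO. -/
theorem stmt11 {m : ℕ} (K : Fin 2 → ℕ) (cls : ∀ i : Fin 2, Fin m → Fin (K i))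
    (A : Fin 2 → Finset (Fin m)) (hA : IsPartition A)
    (B : Fin 2 → Finset (Fin m)) (hB : ∀ i, B i = A (i + 1)) :
    ((∀ i j : Fin 2, ∀ g ∈ B j,
        LexLeZ (gscore (cls i) ((B j).erase g)) (gscore (cls i) (B i))) ∧
      ¬ ∃ B' : Fin 2 → Finset (Fin m), IsPartition B' ∧
        (∀ i, LexLeZ (gscore (cls i) (B i)) (gscore (cls i) (B' i))) ∧
        (∃ i, LexLtZ (gscore (cls i) (B i)) (gscore (cls i) (B' i))))
    ↔
    ((∀ i j : Fin 2, ∀ c ∈ A i,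
        LexLeZ (cscore (cls i) (A j)) (cscore (cls i) ((A i).erase c))) ∧
      ¬ ∃ A' : Fin 2 → Finset (Fin m), IsPartition A' ∧
        (∀ i, LexLeZ (cscore (cls i) (A i)) (cscore (cls i) (A' i))) ∧
        (∃ i, LexLtZ (cscore (cls i) (A i)) (cscore (cls i) (A' i)))) := by
  have h2 : ∀ j : Fin 2, j + 1 + 1 = j := by decide
  have hcases : ∀ i j : Fin 2, j = i ∨ j = i + 1 := by decide
  have hBA : ∀ i, B (i + 1) = A i := fun i => by rw [hB, h2]
  have hBP : IsPartition B := by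
    have : B = fun i => A (i + 1) := funext hB
    rw [this]; exact part_shift A hA
  apply and_congr
  · -- EFX equivalence via the common statement S
    constructor
    · intro hG i j c hc
      rcases hcases i j with h | h
      · subst h
        rw [cscore_eq_neg, cscore_eq_neg, lexle_neg]
        exact gscore_erase_le (cls j) (A j) c hc
      · subst h
        rw [cscore_eq_neg, cscore_eq_neg, lexle_neg]
        have := hG i (i + 1) c (by rw [hBA]; exact hc)
        rwa [hBA, hB i] at this
    · intro hC i j g hg
      rcases hcases i j with h | h
      · subst h; exact gscore_erase_le (cls j) (B j) g hg
      · subst h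
        rw [hBA] at hg ⊢
        rw [hB i]
        have := hC i (i + 1) g hg
        rwa [cscore_eq_neg, cscore_eq_neg, lexle_neg] at this
  · -- PO equivalence
    apply not_congr
    constructor
    · rintro ⟨B', hB'P, hle, j, hlt⟩
      refine ⟨fun i => B' (i + 1), part_shift B' hB'P, fun i => ?_, j, ?_⟩
      · rw [show A i = B (i + 1) from (hBA i).symm,
          gscore_compl (cls i) B hBP (i + 1),
          gscore_compl (cls i) B' hB'P (i + 1), h2, lexle_sub]
        exact hle i
      · rw [show A j = B (j + 1) from (hBA j).symm,
          gscore_compl (cls j) B hBP (j + 1),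
          gscore_compl (cls j) B' hB'P (j + 1), h2, lexlt_sub]
        exact hlt
    · rintro ⟨A', hA'P, hle, j, hlt⟩
      refine ⟨fun i => A' (i + 1), part_shift A' hA'P, fun i => ?_, j, ?_⟩
      · rw [hB i,
          show gscore (cls i) (A (i + 1)) =
            cscore (cls i) (A i) - (-(gscore (cls i) (univ : Finset (Fin m)))) by
              rw [gscore_compl (cls i) A hA i]; funext l; simp,
          show gscore (cls i) (A' (i + 1)) =
            cscore (cls i) (A' i) - (-(gscore (cls i) (univ : Finset (Fin m)))) by
              rw [gscore_compl (cls i) A' hA'P i]; funext l; simp,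
          lexle_sub]
        exact hle i
      · rw [hB j,
          show gscore (cls j) (A (j + 1)) =
            cscore (cls j) (A j) - (-(gscore (cls j) (univ : Finset (Fin m)))) by
              rw [gscore_compl (cls j) A hA j]; funext l; simp,
          show gscore (cls j) (A' (j + 1)) =
            cscore (cls j) (A' j) - (-(gscore (cls j) (univ : Finset (Fin m)))) by
              rw [gscore_compl (cls j) A' hA'P j]; funext l; simp,
          lexlt_sub]
        exact hlt
end
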